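/- arXiv:2511.00616 — 4 statements merged into one kernel-verified Lean document; each statement's English description precedes it below -/
import Mathlib

section
/- Let G be a finite simple graph on n ≥ 1 vertices with minimum degree δ. Then κ(G) = min over integers s with 1 ≤ s ≤ n − δ of (min over vertex sets S with |S| = s of |N(S)|); equivalently, κ(G) = min{|N(S)| : S ⊆ V(G), 1 ≤ |S| ≤ n − δ}. -/
/-!
If `S ∪ N(S)` misses a vertex, then `N(S)` separates `S` from it, so `κ ≤ |N(S)|`; otherwise
`|N(S)| = n - |S| ≥ δ ≥ κ`, where `κ ≤ δ` because the neighbourhood of a vertex of minimum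
degree is such a separator (or leaves at most one vertex). Conversely, a minimum separator `A`
of a graph with at least two vertices left contains `N(S)` for the vertex set `S` of a
component of `G - A`; a vertex `b` outside `A` and `S` has all its neighbours outside `S`,
which gives `|S| ≤ n - 1 - deg b ≤ n - δ`.
-/

namespace SimpleGraph

variable {V : Type*}

/-- The vertex connectivity `κ(G)`: the minimum size of a vertex set `A` whose deletion
leaves a graph that is disconnected or has at most one vertex. -/
noncomputable def vertConn [Fintype V] [DecidableEq V] (G : SimpleGraph V) : ℕ :=
  sInf {k | ∃ A : Finset V, A.card = k ∧
    ((Aᶜ).card ≤ 1 ∨ ¬ (G.induce ((↑A : Set V)ᶜ)).Connected)}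

/-- The external neighborhood `N(S)` of a vertex set `S`: the vertices outside `S`
having a neighbor in `S`. -/
def extNbhd [Fintype V] [DecidableEq V] (G : SimpleGraph V) [DecidableRel G.Adj]
    (S : Finset V) : Finset V :=
  Finset.univ.filter fun v => v ∉ S ∧ ∃ u ∈ S, G.Adj u v

end SimpleGraph

namespace SimpleGraph

open Finset

variable {V : Type*} [Fintype V] [DecidableEq V] (G : SimpleGraph V)

lemma vertConn_le_card {A : Finset V}
    (hA : #Aᶜ ≤ 1 ∨ ¬ (G.induce ((↑A : Set V)ᶜ)).Connected) : G.vertConn ≤ #A :=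
  Nat.sInf_le ⟨A, rfl, hA⟩

lemma exists_card_eq_vertConn :
    ∃ A : Finset V, #A = G.vertConn ∧
      (#Aᶜ ≤ 1 ∨ ¬ (G.induce ((↑A : Set V)ᶜ)).Connected) :=
  Nat.sInf_mem (s := {k | ∃ A : Finset V, #A = k ∧ _}) ⟨_, univ, rfl, Or.inl (by simp)⟩

variable [DecidableRel G.Adj] {S : Finset V}

@[simp]
lemma mem_extNbhd {v : V} : v ∈ G.extNbhd S ↔ v ∉ S ∧ ∃ u ∈ S, G.Adj u v := by
  simp [extNbhd]

lemma extNbhd_singleton (v : V) : G.extNbhd {v} = G.neighborFinset v := by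
  ext w
  simp only [mem_extNbhd, mem_singleton, exists_eq_left, mem_neighborFinset]
  exact ⟨And.right, fun h => ⟨(G.ne_of_adj h).symm, h⟩⟩

lemma card_add_degree_lt_card {b : V} (hbS : b ∉ S) (hbN : b ∉ G.extNbhd S) :
    #S + G.degree b < Fintype.card V := by
  have hdisj : Disjoint S (insert b (G.neighborFinset b)) := by
    refine disjoint_right.mpr fun x hx hxS => ?_
    rcases mem_insert.mp hx with rfl | hbx
    · exact hbS hxS
    · exact hbN ((G.mem_extNbhd).mpr ⟨hbS, x, hxS, ((G.mem_neighborFinset b x).mp hbx).symm⟩)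
  have := card_le_univ (S ∪ insert b (G.neighborFinset b))
  rw [card_union_of_disjoint hdisj, card_insert_of_notMem (by simp),
    card_neighborFinset_eq_degree] at this
  omega

lemma not_connected_induce_compl_extNbhd {u w : V} (hu : u ∈ S) (hwS : w ∉ S)
    (hwN : w ∉ G.extNbhd S) : ¬ (G.induce ((↑(G.extNbhd S) : Set V)ᶜ)).Connected := by
  intro hconn
  have huN : u ∉ G.extNbhd S := fun h => ((G.mem_extNbhd).mp h).1 hu
  obtain ⟨p⟩ := hconn.preconnected ⟨u, huN⟩ ⟨w, hwN⟩
  obtain ⟨d, -, hd_fst, hd_snd⟩ := p.exists_boundary_dart {x | (x : V) ∈ S} hu hwS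
  exact d.snd.2 ((G.mem_extNbhd).mpr ⟨hd_snd, d.fst, hd_fst, d.adj⟩)

lemma exists_extNbhd_subset_of_not_connected {A : Finset V}
    (hA : ¬ (G.induce ((↑A : Set V)ᶜ)).Connected) (hne : Aᶜ.Nonempty) :
    ∃ S : Finset V, S.Nonempty ∧ G.extNbhd S ⊆ A ∧ ∃ b, b ∉ S ∧ b ∉ A := by
  classical
  set H := G.induce ((↑A : Set V)ᶜ)
  obtain ⟨x, hx⟩ := hne
  have : Nonempty ((↑A : Set V)ᶜ : Set V) := ⟨⟨x, by simpa using hx⟩⟩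
  obtain ⟨a, b, hab⟩ : ∃ a b, ¬ H.Reachable a b := by
    by_contra! h
    exact hA ⟨h⟩
  let S : Finset V := univ.filter fun z => ∃ hz : z ∉ A, H.Reachable a ⟨z, hz⟩
  have hNS : G.extNbhd S ⊆ A := by
    intro y hy
    obtain ⟨hyS, z, hzS, hzy⟩ := (G.mem_extNbhd).mp hy
    obtain ⟨-, hzA, hreach⟩ := mem_filter.mp hzS
    by_contra hyA
    exact hyS (mem_filter.mpr ⟨mem_univ y, hyA,
      hreach.trans (Adj.reachable (G := H) (u := ⟨z, hzA⟩) (v := ⟨y, hyA⟩) hzy)⟩)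
  refine ⟨S, ⟨a, mem_filter.mpr ⟨mem_univ _, a.2, .rfl⟩⟩, hNS, b, ?_, b.2⟩
  intro hb
  obtain ⟨-, _, hreach⟩ := mem_filter.mp hb
  exact hab hreach

variable [Nonempty V]

lemma vertConn_le_minDegree : G.vertConn ≤ G.minDegree := by
  obtain ⟨v, hv⟩ := G.exists_minimal_degree_vertex
  rw [hv, ← card_neighborFinset_eq_degree]
  by_cases hsmall : #(G.neighborFinset v)ᶜ ≤ 1
  · exact G.vertConn_le_card (Or.inl hsmall)
  obtain ⟨w, hw, hwv⟩ := exists_mem_ne (by omega : 1 < #(G.neighborFinset v)ᶜ) v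
  rw [← extNbhd_singleton] at hw ⊢
  exact G.vertConn_le_card
    (Or.inr (G.not_connected_induce_compl_extNbhd (mem_singleton_self v)
      (notMem_singleton.mpr hwv) (mem_compl.mp hw)))

lemma vertConn_le_card_extNbhd (hS : S.Nonempty)
    (hcard : #S ≤ Fintype.card V - G.minDegree) : G.vertConn ≤ #(G.extNbhd S) := by
  by_cases hcover : ∀ w, w ∈ S ∨ w ∈ G.extNbhd S
  · have hn : Fintype.card V ≤ #S + #(G.extNbhd S) :=
      (card_le_card fun w _ => mem_union.mpr (hcover w)).trans (card_union_le _ _)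
    have := G.minDegree_lt_card
    exact G.vertConn_le_minDegree.trans (by omega)
  push Not at hcover
  obtain ⟨w, hwS, hwN⟩ := hcover
  obtain ⟨u, hu⟩ := hS
  exact G.vertConn_le_card (Or.inr (G.not_connected_induce_compl_extNbhd hu hwS hwN))

lemma exists_card_extNbhd_le_vertConn :
    ∃ S : Finset V, S.Nonempty ∧ #S ≤ Fintype.card V - G.minDegree ∧
      #(G.extNbhd S) ≤ G.vertConn := by
  obtain ⟨A, hAκ, hA⟩ := G.exists_card_eq_vertConn
  by_cases hsmall : #Aᶜ ≤ 1
  · obtain ⟨v, hv⟩ := G.exists_minimal_degree_vertex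
    have := G.minDegree_lt_card
    have := card_compl_add_card A
    refine ⟨{v}, singleton_nonempty v, by simp; omega, ?_⟩
    rw [extNbhd_singleton, card_neighborFinset_eq_degree, ← hv]
    omega
  have hne : Aᶜ.Nonempty := card_pos.mp (by omega)
  obtain ⟨S, hS, hNS, b, hbS, hbA⟩ :=
    G.exists_extNbhd_subset_of_not_connected (hA.resolve_left hsmall) hne
  have hbN : b ∉ G.extNbhd S := fun h => hbA (hNS h)
  have := G.card_add_degree_lt_card hbS hbN
  have := G.minDegree_le_degree b
  exact ⟨S, hS, by omega, hAκ ▸ card_le_card hNS⟩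

end SimpleGraph

/-- For a graph `G` on `n ≥ 1` vertices with minimum degree `δ`,
`κ(G) = min {|N(S)| : S ⊆ V(G), 1 ≤ |S| ≤ n - δ}`. -/
theorem stmt6 {V : Type*} [Fintype V] [DecidableEq V] [Nonempty V]
    (G : SimpleGraph V) [DecidableRel G.Adj] :
    G.vertConn = sInf {c | ∃ S : Finset V,
      1 ≤ S.card ∧ S.card ≤ Fintype.card V - G.minDegree ∧ c = (G.extNbhd S).card} := by
  obtain ⟨S, hS, hcard, hle⟩ := G.exists_card_extNbhd_le_vertConn
  have hmem : (G.extNbhd S).card ∈ {c | ∃ S : Finset V,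
      1 ≤ S.card ∧ S.card ≤ Fintype.card V - G.minDegree ∧ c = (G.extNbhd S).card} :=
    ⟨S, hS.card_pos, hcard, rfl⟩
  refine le_antisymm (le_csInf ⟨_, hmem⟩ ?_) ((Nat.sInf_le hmem).trans hle)
  rintro _ ⟨T, hT, hTcard, rfl⟩
  exact G.vertConn_le_card_extNbhd (Finset.card_pos.mp hT) hTcard
end

section
/- Let G be a finite simple graph on n ≥ 1 vertices whose connected components have sizes a_1 ≤ a_2 ≤ … ≤ a_r. Then ᾱ(G) = n if and only if a_i − 1 ≤ a_1 + a_2 + … + a_{i−1} for every i = 1, …, r (where the empty sum for i = 1 is 0). -/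
/-!
The sides of an `(s, t)`-bipartite-hole with `s + t = n` are unions of connected components,
and conversely any union of components of size `s` together with `t ≤ n - s` further vertices
is a hole. Hence `ᾱ(G) = n` exactly when every number up to `n` is a sum of component sizes.
For a nondecreasing sequence this completeness is Brown's criterion
`a_i ≤ 1 + a_1 + ⋯ + a_{i-1}`: sufficiency by induction on the largest term, necessity because a
violating `a_i` makes `1 + a_1 + ⋯ + a_{i-1}` unreachable.
-/

namespace SimpleGraph

variable {V : Type*}

/-- `G` has an `(s,t)`-bipartite-hole. -/
def HasBipHole (G : SimpleGraph V) (s t : ℕ) : Prop :=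
  ∃ S T : Finset V, Disjoint S T ∧ S.card = s ∧ T.card = t ∧
    ∀ a ∈ S, ∀ b ∈ T, ¬ G.Adj a b

/-- The bipartite-hole-number `ᾱ(G)`. -/
noncomputable def bipHoleNum (G : SimpleGraph V) : ℕ :=
  sInf {k | 0 < k ∧ ∃ s t : ℕ, 0 < s ∧ 0 < t ∧ s + t = k + 1 ∧ ¬ G.HasBipHole s t}

end SimpleGraph

open Finset

theorem Finset.exists_subset_sum_eq_of_le_sum_lt_add_one {ι : Type*} [LinearOrder ι]
    (f : ι → ℕ) (s : Finset ι) (hf : ∀ i ∈ s, f i ≤ ∑ j ∈ s with j < i, f j + 1)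
    {v : ℕ} (hv : v ≤ ∑ i ∈ s, f i) : ∃ I ⊆ s, ∑ i ∈ I, f i = v := by
  induction s using Finset.induction_on_max generalizing v with
  | empty => exact ⟨∅, empty_subset _, by simp_all⟩
  | insert m s hlt ih =>
    have hm : m ∉ s := fun h => (hlt m h).false
    have hfs : ∀ i ∈ s, f i ≤ ∑ j ∈ s with j < i, f j + 1 := fun i hi => by
      simpa [filter_insert, (hlt i hi).not_gt] using hf i (mem_insert_of_mem hi)
    have hfm : f m ≤ ∑ j ∈ s, f j + 1 := by
      simpa [filter_insert, filter_true_of_mem hlt] using hf m (mem_insert_self m s)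
    rw [sum_insert hm] at hv
    by_cases hvs : v ≤ ∑ j ∈ s, f j
    · obtain ⟨I, hIs, hI⟩ := ih hfs hvs
      exact ⟨I, hIs.trans (subset_insert m s), hI⟩
    · obtain ⟨I, hIs, hI⟩ := ih hfs (v := v - f m) (by omega)
      refine ⟨insert m I, insert_subset_insert m hIs, ?_⟩
      rw [sum_insert (fun h => hm (hIs h))]
      omega

def IsSubsetSumComplete {ι : Type*} [Fintype ι] (a : ι → ℕ) : Prop :=
  ∀ v ≤ ∑ i, a i, ∃ I : Finset ι, ∑ i ∈ I, a i = v

theorem isSubsetSumComplete_comp_equiv {ι κ : Type*} [Fintype ι] [Fintype κ] (a : κ → ℕ)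
    (e : ι ≃ κ) : IsSubsetSumComplete (a ∘ e) ↔ IsSubsetSumComplete a := by
  have hsum (I : Finset ι) : ∑ i ∈ I, (a ∘ e) i = ∑ k ∈ I.map e.toEmbedding, a k := by
    simp [sum_map]
  unfold IsSubsetSumComplete
  rw [show ∑ i, (a ∘ e) i = ∑ k, a k from e.sum_comp a]
  refine forall₂_congr fun v _ => ⟨fun ⟨I, hI⟩ => ⟨_, hsum I ▸ hI⟩, fun ⟨K, hK⟩ => ?_⟩
  exact ⟨K.map e.symm.toEmbedding, by rw [hsum, map_map]; simpa using hK⟩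

theorem Monotone.isSubsetSumComplete_iff {ι : Type*} [Fintype ι] [LinearOrder ι] {a : ι → ℕ}
    (ha : Monotone a) : IsSubsetSumComplete a ↔ ∀ i, a i - 1 ≤ ∑ j with j < i, a j := by
  constructor
  · intro hc i
    by_contra! hi
    have hPi : ∑ j with j < i, a j + a i ≤ ∑ j, a j := by
      rw [add_comm, ← sum_insert (by simp : i ∉ ({j | j < i} : Finset ι))]
      exact sum_le_sum_of_subset (subset_univ _)
    obtain ⟨I, hI⟩ := hc (∑ j with j < i, a j + 1) (by omega)
    by_cases hIi : ∃ j ∈ I, i ≤ j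
    · obtain ⟨j, hjI, hij⟩ := hIi
      have : a j ≤ ∑ j ∈ I, a j := single_le_sum (fun _ _ => Nat.zero_le _) hjI
      have := ha hij
      omega
    · have : ∑ j ∈ I, a j ≤ ∑ j with j < i, a j :=
        sum_le_sum_of_subset fun j hj => by simpa using not_le.1 fun h => hIi ⟨j, hj, h⟩
      omega
  · intro h v hv
    obtain ⟨I, -, hI⟩ := univ.exists_subset_sum_eq_of_le_sum_lt_add_one a
      (fun i _ => by have := h i; omega) hv
    exact ⟨I, hI⟩

namespace SimpleGraph

variable {V : Type*} {G : SimpleGraph V}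

def IsAdjClosed (G : SimpleGraph V) (S : Finset V) : Prop :=
  ∀ u ∈ S, ∀ v, G.Adj u v → v ∈ S

theorem isAdjClosed_univ [Fintype V] : G.IsAdjClosed univ := fun _ _ _ _ => mem_univ _

theorem IsAdjClosed.mem_of_reachable {S : Finset V} (hS : G.IsAdjClosed S)
    {u v : V} (hu : u ∈ S) (huv : G.Reachable u v) : v ∈ S := by
  obtain ⟨p⟩ := huv
  induction p with
  | nil => exact hu
  | cons h _ ih => exact ih (hS _ hu _ h)

theorem bipHoleNum_le {s t : ℕ} (hs : 0 < s) (ht : 0 < t) (h : ¬ G.HasBipHole s t) :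
    G.bipHoleNum ≤ s + t - 1 :=
  Nat.sInf_le ⟨by omega, s, t, hs, ht, by omega, h⟩

theorem IsAdjClosed.card_eq_sum_ncard_supp_image [DecidableEq G.ConnectedComponent]
    {S : Finset V} (hS : G.IsAdjClosed S) :
    S.card = ∑ c ∈ S.image G.connectedComponentMk, c.supp.ncard := by
  rw [card_eq_sum_card_fiberwise (f := G.connectedComponentMk) fun v hv => mem_image_of_mem _ hv]
  refine sum_congr rfl fun c hc => ?_
  obtain ⟨u, hu, rfl⟩ := mem_image.1 hc
  rw [← Set.ncard_coe_finset]
  congr 1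
  ext v
  simp only [coe_filter, Set.mem_ofPred_eq, ConnectedComponent.mem_supp_iff,
    ConnectedComponent.eq]
  exact ⟨And.right, fun h => ⟨hS.mem_of_reachable hu h.symm, h⟩⟩

variable [Fintype V]

theorem not_hasBipHole_of_card_lt {s t : ℕ} (h : Fintype.card V < s + t) : ¬ G.HasBipHole s t :=
  fun ⟨S, T, hST, hS, hT, _⟩ => by
    classical
    have := card_le_univ (S ∪ T)
    rw [card_union_of_disjoint hST] at this
    omega

theorem exists_not_hasBipHole_bipHoleNum : ∃ s t, 0 < s ∧ 0 < t ∧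
    s + t = G.bipHoleNum + 1 ∧ ¬ G.HasBipHole s t :=
  (Nat.sInf_mem (s := {k | 0 < k ∧ ∃ s t : ℕ, 0 < s ∧ 0 < t ∧ s + t = k + 1 ∧
    ¬ G.HasBipHole s t}) ⟨Fintype.card V + 1, by omega, 1, Fintype.card V + 1, by omega,
      by omega, by omega, not_hasBipHole_of_card_lt (by omega)⟩).2

theorem bipHoleNum_eq_card_iff [Nonempty V] : G.bipHoleNum = Fintype.card V ↔
    ∀ s t, 0 < s → 0 < t → s + t ≤ Fintype.card V → G.HasBipHole s t := by
  have hn : 0 < Fintype.card V := Fintype.card_pos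
  constructor
  · intro h s t hs ht hst
    by_contra hhole
    have := G.bipHoleNum_le hs ht hhole
    omega
  · intro h
    obtain ⟨s, t, hs, ht, hst, hhole⟩ := G.exists_not_hasBipHole_bipHoleNum
    have hle := G.bipHoleNum_le one_pos hn (not_hasBipHole_of_card_lt (by omega))
    have hlt : Fintype.card V < s + t := by
      by_contra! hst'
      exact hhole (h s t hs ht hst')
    omega

theorem sum_ncard_supp [Fintype G.ConnectedComponent] :
    ∑ c : G.ConnectedComponent, c.supp.ncard = Fintype.card V := by
  classical
  rw [← card_univ, (isAdjClosed_univ (G := G)).card_eq_sum_ncard_supp_image,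
    image_univ_of_surjective (f := G.connectedComponentMk) fun c => c.exists_rep]

theorem IsAdjClosed.hasBipHole {S : Finset V} (hS : G.IsAdjClosed S) {t : ℕ}
    (ht : S.card + t ≤ Fintype.card V) : G.HasBipHole S.card t := by
  classical
  obtain ⟨T, hTS, hT⟩ := exists_subset_card_eq (s := Sᶜ) (n := t)
    (by rw [card_compl]; omega)
  exact ⟨S, T, disjoint_compl_right.mono_right hTS, rfl, hT,
    fun u hu v hv huv => mem_compl.1 (hTS hv) (hS u hu v huv)⟩

theorem HasBipHole.exists_isAdjClosed {s t : ℕ} (h : G.HasBipHole s t)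
    (hst : s + t = Fintype.card V) :
    ∃ S : Finset V, S.card = s ∧ G.IsAdjClosed S := by
  classical
  obtain ⟨S, T, hST, hS, hT, hnadj⟩ := h
  have hcover : S ∪ T = univ := eq_univ_of_card _ (by rw [card_union_of_disjoint hST]; omega)
  refine ⟨S, hS, fun u hu v huv => ?_⟩
  have hv := mem_univ v
  rw [← hcover, mem_union] at hv
  exact hv.resolve_right fun hvT => hnadj u hu v hvT huv

theorem forall_hasBipHole_iff_isSubsetSumComplete [Fintype G.ConnectedComponent] :
    (∀ s t, 0 < s → 0 < t → s + t ≤ Fintype.card V → G.HasBipHole s t) ↔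
      IsSubsetSumComplete fun c : G.ConnectedComponent => c.supp.ncard := by
  classical
  unfold IsSubsetSumComplete
  rw [sum_ncard_supp]
  constructor
  · intro h v hv
    obtain ⟨S, hSv, hS⟩ : ∃ S : Finset V, S.card = v ∧ G.IsAdjClosed S := by
      rcases Nat.eq_zero_or_pos v with rfl | hv0
      · exact ⟨∅, rfl, by simp [IsAdjClosed]⟩
      rcases hv.lt_or_eq with hlt | rfl
      · exact (h v (Fintype.card V - v) hv0 (by omega) (by omega)).exists_isAdjClosed (by omega)
      · exact ⟨univ, card_univ, isAdjClosed_univ⟩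
    exact ⟨_, hS.card_eq_sum_ncard_supp_image.symm.trans hSv⟩
  · rintro h s t - - hst
    obtain ⟨C, rfl⟩ := h s (by omega)
    set S : Finset V := {v | G.connectedComponentMk v ∈ C}
    have hS : G.IsAdjClosed S := fun u hu v huv => by
      simpa [S, ConnectedComponent.sound huv.reachable] using hu
    have hSC : S.image G.connectedComponentMk = C := by
      ext c
      induction c using ConnectedComponent.ind with | h v => ?_
      simp only [S, mem_image, mem_filter, mem_univ, true_and]
      exact ⟨fun ⟨u, hu, huv⟩ => huv ▸ hu, fun h => ⟨v, h, rfl⟩⟩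
    rw [← hSC, ← hS.card_eq_sum_ncard_supp_image] at hst ⊢
    exact hS.hasBipHole hst

end SimpleGraph

theorem stmt8_general {V : Type*} [Fintype V] [Nonempty V] (G : SimpleGraph V)
    (r : ℕ) (a : Fin r → ℕ) (ha : Monotone a)
    (e : G.ConnectedComponent ≃ Fin r)
    (hsize : ∀ c : G.ConnectedComponent, c.supp.ncard = a (e c)) :
    G.bipHoleNum = Fintype.card V ↔
      ∀ i : Fin r, a i - 1 ≤ ∑ j ∈ Finset.univ.filter (fun j => j < i), a j := by
  classical
  have hsizes : (fun c : G.ConnectedComponent => c.supp.ncard) = a ∘ e := funext hsize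
  rw [G.bipHoleNum_eq_card_iff, G.forall_hasBipHole_iff_isSubsetSumComplete, hsizes,
    isSubsetSumComplete_comp_equiv, ha.isSubsetSumComplete_iff]

/-- Let `G` be a graph on `n ≥ 1` vertices whose connected components have
sizes `a 0 ≤ a 1 ≤ … ≤ a (r-1)` (listed in nondecreasing order via a bijection `e` between
the components and `Fin r`). Then `ᾱ(G) = n` iff `a i - 1 ≤ ∑_{j < i} a j` for all `i`. -/
theorem stmt8 {V : Type*} [Fintype V] [DecidableEq V] [Nonempty V] (G : SimpleGraph V)
    (r : ℕ) (a : Fin r → ℕ) (ha : Monotone a)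
    (e : G.ConnectedComponent ≃ Fin r)
    (hsize : ∀ c : G.ConnectedComponent, c.supp.ncard = a (e c)) :
    G.bipHoleNum = Fintype.card V ↔
      ∀ i : Fin r, a i - 1 ≤ ∑ j ∈ Finset.univ.filter (fun j => j < i), a j :=
  stmt8_general G r a ha e hsize
end

section
/- Let G be a finite simple graph and let C be a cycle of G, with a fixed cyclic orientation, such that there is no cycle C' of G with V(C) ⊊ V(C'). Let H be a connected component of G − V(C) and let T = {v ∈ V(C) : v has a neighbor in V(H)}. Then the set T⁺ = {v⁺ : v ∈ T} of successors of T on C is an independent set of G: no two distinct vertices of T⁺ are adjacent. -/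
/-!
Suppose `a, b ∈ T` with successors `a⁺, b⁺` adjacent, and let `y, x ∈ H` be neighbours of `b, a`.
Removing the edges `aa⁺` and `bb⁺` splits `C` into disjoint paths `a⁺ ⋯ b` and `b⁺ ⋯ a`, and a path
from `y` to `x` inside `H` splices them into the cycle `a⁺ ⋯ b y ⋯ x a ⋯ b⁺ a⁺`, whose vertex set
strictly contains `V(C)`.
-/

namespace SimpleGraph

variable {V : Type*} {G : SimpleGraph V}

theorem Preconnected.exists_isPath_of_induce {H : Set V} (hH : (G.induce H).Preconnected)
    (a b : H) : ∃ r : G.Walk a b, r.IsPath ∧ ∀ u ∈ r.support, u ∈ H := by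
  classical
  obtain ⟨p, hp⟩ := (hH a b).some.toPath
  have hpH : ∀ u ∈ (p.map (Embedding.induce H).toHom).support, u ∈ H := by
    rw [Walk.support_map]
    simp only [List.mem_map]
    rintro _ ⟨u, -, rfl⟩
    exact u.property
  exact ⟨_, hp.map Subtype.val_injective, hpH⟩

namespace Walk

theorem exists_eq_append_cons_of_mem_darts {u v : V} {q : G.Walk u v} {d : G.Dart}
    (hd : d ∈ q.darts) :
    ∃ (p : G.Walk u d.fst) (s : G.Walk d.snd v), q = p.append (cons d.adj s) := by
  induction q with
  | nil => simp at hd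
  | cons h q ih =>
    rw [darts_cons, List.mem_cons] at hd
    rcases hd with rfl | hd
    · exact ⟨nil, q, rfl⟩
    · obtain ⟨p, s, rfl⟩ := ih hd
      exact ⟨cons h p, s, rfl⟩

theorem IsPath.cons_isCycle {u v : V} {p : G.Walk v u} (hp : p.IsPath) (h : G.Adj u v)
    (hl : p.length ≠ 1) : (cons h p).IsCycle :=
  (cons_isCycle_iff p h).mpr
    ⟨hp, fun he => hl (hp.length_eq_one_of_mem_edges (Sym2.eq_swap ▸ he))⟩

theorem IsCycle.exists_isPath_of_mem_darts {v : V} {c : G.Walk v v} (hc : c.IsCycle)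
    {d : G.Dart} (hd : d ∈ c.darts) :
    ∃ q : G.Walk d.snd d.fst, q.IsPath ∧ (∀ u, u ∈ q.support ↔ u ∈ c.support) ∧
      ∀ d' ∈ c.darts, d' ≠ d → d' ∈ q.darts := by
  classical
  have hfst : d.fst ∈ c.support := c.dart_fst_mem_support_of_mem_darts hd
  have hc₁ := hc.rotate hfst
  have hd₁ : ∀ d', d' ∈ (c.rotate _ hfst).darts ↔ d' ∈ c.darts :=
    fun _ => (rotate_darts c _ hfst).mem_iff
  have hs₁ : ∀ u, u ∈ (c.rotate _ hfst).support ↔ u ∈ c.support :=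
    fun _ => mem_support_rotate_iff c _ hfst
  generalize c.rotate _ hfst = c₁ at hc₁ hd₁ hs₁
  cases c₁ with
  | nil => exact absurd hc₁ not_isCycle_nil
  | cons h q =>
    -- the darts of a cycle are determined by their first vertex
    have hfirst : d = (⟨(d.fst, _), h⟩ : G.Dart) :=
      List.inj_on_of_nodup_map (by rw [map_fst_darts]; exact hc₁.nodup_dropLast_support)
        ((hd₁ d).mpr hd) List.mem_cons_self rfl
    obtain ⟨⟨a, b⟩, hab⟩ := d
    simp only [Dart.mk.injEq, Prod.mk.injEq, true_and] at hfirst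
    subst hfirst
    refine ⟨q, ((cons_isCycle_iff q h).mp hc₁).1, fun u => ?_, fun d' hd' hne => ?_⟩
    · rw [← hs₁, support_cons, List.mem_cons, or_iff_right_of_imp]
      rintro rfl
      exact q.end_mem_support
    · have hd'q := (hd₁ d').mpr hd'
      rw [darts_cons, List.mem_cons] at hd'q
      exact hd'q.resolve_left hne

theorem IsCycle.exists_disjoint_paths_of_mem_darts {v : V} {c : G.Walk v v} (hc : c.IsCycle)
    {d₁ d₂ : G.Dart} (hd₁ : d₁ ∈ c.darts) (hd₂ : d₂ ∈ c.darts) (hne : d₁ ≠ d₂) :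
    ∃ (p : G.Walk d₁.snd d₂.fst) (s : G.Walk d₂.snd d₁.fst), (p.support ++ s.support).Nodup ∧
      ∀ u, u ∈ c.support ↔ u ∈ p.support ∨ u ∈ s.support := by
  obtain ⟨q, hq, hqc, hqd⟩ := hc.exists_isPath_of_mem_darts hd₁
  obtain ⟨p, s, rfl⟩ := exists_eq_append_cons_of_mem_darts (hqd d₂ hd₂ hne.symm)
  have hsupp : (p.append (cons d₂.adj s)).support = p.support ++ s.support := by
    rw [support_append, support_cons, List.tail_cons]
  refine ⟨p, s, hsupp ▸ hq.support_nodup, fun u => ?_⟩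
  rw [← hqc, hsupp, List.mem_append]

theorem exists_isCycle_of_disjoint_paths {a a' b b' x y : V}
    (p : G.Walk a' b) (s : G.Walk b' a) (r : G.Walk y x)
    (hps : (p.support ++ s.support).Nodup) (hr : r.IsPath)
    (hrp : r.support.Disjoint p.support) (hrs : r.support.Disjoint s.support)
    (hby : G.Adj b y) (hxa : G.Adj x a) (hba : G.Adj b' a') :
    ∃ c : G.Walk b' b', c.IsCycle ∧
      ∀ u, u ∈ c.support ↔ u ∈ p.support ∨ u ∈ r.support ∨ u ∈ s.support := by
  set P := p.append (cons hby (r.append (cons hxa s.reverse)))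
  have hsupp : P.support = p.support ++ (r.support ++ s.support.reverse) := by
    simp [P, support_append, support_reverse]
  have hP : P.IsPath := by
    rw [isPath_def, hsupp]
    have hperm : (p.support ++ (r.support ++ s.support.reverse)).Perm
        (r.support ++ (p.support ++ s.support)) :=
      (((List.reverse_perm _).append_left _).append_left _).trans
        (List.perm_append_comm_assoc _ _ _)
    exact hperm.nodup_iff.mpr
      (hr.support_nodup.append hps (List.disjoint_append_right.mpr ⟨hrp, hrs⟩))
  have hl : P.length ≠ 1 := by
    simp only [P, length_append, length_cons, length_reverse]
    omega
  refine ⟨cons hba P, hP.cons_isCycle hba hl, fun u => ?_⟩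
  rw [support_cons, List.mem_cons, hsupp]
  simp only [List.mem_append, List.mem_reverse]
  exact ⟨fun h => h.elim (fun hu => Or.inr (Or.inr (hu ▸ s.start_mem_support))) id, Or.inr⟩

end Walk

end SimpleGraph

open SimpleGraph

theorem stmt13_general {V : Type*} (G : SimpleGraph V)
    (v₀ : V) (c : G.Walk v₀ v₀) (hc : c.IsCycle)
    (hmax : ∀ (w : V) (c' : G.Walk w w), c'.IsCycle →
      ¬ {u : V | u ∈ c.support} ⊂ {u : V | u ∈ c'.support})
    (H : Set V)
    (hHdisj : ∀ x ∈ H, x ∉ c.support)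
    (hHconn : (G.induce H).Connected)
    (T : Set V) (hT : T = {u : V | u ∈ c.support ∧ ∃ w ∈ H, G.Adj u w}) :
    ∀ d₁ ∈ c.darts, ∀ d₂ ∈ c.darts, d₁.fst ∈ T → d₂.fst ∈ T →
      ¬ G.Adj d₁.snd d₂.snd := by
  subst hT
  rintro d₁ hd₁ d₂ hd₂ ⟨-, x, hxH, hax⟩ ⟨-, y, hyH, hby⟩ hadj
  have hne : d₁ ≠ d₂ := by
    rintro rfl
    exact G.irrefl hadj
  obtain ⟨p, s, hps, hcover⟩ := hc.exists_disjoint_paths_of_mem_darts hd₁ hd₂ hne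
  obtain ⟨r, hr, hrH⟩ := hHconn.preconnected.exists_isPath_of_induce ⟨y, hyH⟩ ⟨x, hxH⟩
  have hrc : ∀ u ∈ r.support, u ∉ c.support := fun u hu => hHdisj u (hrH u hu)
  obtain ⟨c', hc', hc'supp⟩ := Walk.exists_isCycle_of_disjoint_paths p s r hps hr
    (fun u hu hp => hrc u hu ((hcover u).mpr (Or.inl hp)))
    (fun u hu hs => hrc u hu ((hcover u).mpr (Or.inr hs))) hby hax.symm hadj.symm
  refine hmax _ c' hc' ((Set.ssubset_iff_of_subset fun u hu => ?_).mpr ⟨y, ?_, hHdisj y hyH⟩)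
  · exact (hc'supp u).mpr (((hcover u).mp hu).imp_right Or.inr)
  · exact (hc'supp y).mpr (Or.inr (Or.inl r.start_mem_support))

/-- Let `C` be a cycle of `G` (with the orientation given by traversal,
so that the darts of `C` record each vertex together with its successor) such that no cycle
`C'` of `G` satisfies `V(C) ⊊ V(C')`. Let `H` be (the vertex set of) a connected component of
`G - V(C)` and `T` the set of vertices of `C` with a neighbor in `H`. Then the set
`T⁺ = {d.snd : d a dart of C with d.fst ∈ T}` of successors of `T` on `C` is an independent
set of `G`. -/
theorem stmt13 {V : Type*} (G : SimpleGraph V)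
    (v₀ : V) (c : G.Walk v₀ v₀) (hc : c.IsCycle)
    (hmax : ∀ (w : V) (c' : G.Walk w w), c'.IsCycle →
      ¬ {u : V | u ∈ c.support} ⊂ {u : V | u ∈ c'.support})
    (H : Set V)
    (hHdisj : ∀ x ∈ H, x ∉ c.support)
    (hHconn : (G.induce H).Connected)
    (hHmax : ∀ x ∈ H, ∀ y, y ∉ H → y ∉ c.support → ¬ G.Adj x y)
    (T : Set V) (hT : T = {u : V | u ∈ c.support ∧ ∃ w ∈ H, G.Adj u w}) :
    ∀ d₁ ∈ c.darts, ∀ d₂ ∈ c.darts, d₁.fst ∈ T → d₂.fst ∈ T →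
      ¬ G.Adj d₁.snd d₂.snd :=
  stmt13_general G v₀ c hc hmax H hHdisj hHconn T hT
end

section
/- Let a, b be integers with 2 ≤ a ≤ b. Then ᾱ(K_a ⊕₁ K_b) = min{2a − 1, b}. -/
/-- `K_a ⊕₁ K_b`: the 1-sum of two complete graphs, on `a + b - 1` vertices; the vertices
`0, …, a-1` form one clique and the vertices `a-1, …, a+b-2` form the other, with the
vertex `a-1` shared. -/
def oneSumGraph (a b : ℕ) : SimpleGraph (Fin (a + b - 1)) where
  Adj x y := x ≠ y ∧ ((x.val < a ∧ y.val < a) ∨ (a ≤ x.val + 1 ∧ a ≤ y.val + 1))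
  symm := by
    constructor
    rintro x y ⟨hxy, h⟩
    exact ⟨hxy.symm, by tauto⟩
  loopless := by constructor; rintro x ⟨hx, -⟩; exact hx rfl

/-! The non-edges of `K_a ⊕₁ K_b` join the `a - 1` private vertices of the first clique to the
`b - 1` private vertices of the second. Hence a bipartite hole with both sides nonempty has one
side among the first and the other among the second, so the graph has an `(s,t)`-bipartite-hole
iff `s ≤ b - 1, t ≤ a - 1` or vice versa. For `s + t ≤ min (2a - 1) b` one of `s, t` is at most
`a - 1` and the other at most `b - 1`, while `(a, a)` (if `2a - 1 ≤ b`) or `(b, 1)` (otherwise)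
is a pair with `s + t = min (2a - 1) b + 1` and no hole. -/

namespace SimpleGraph

variable {V : Type*} {G : SimpleGraph V} {s t : ℕ}

theorem HasBipHole.symm (h : G.HasBipHole s t) : G.HasBipHole t s := by
  obtain ⟨S, T, hST, hS, hT, hadj⟩ := h
  exact ⟨T, S, hST.symm, hT, hS, fun y hy x hx hxy => hadj x hx y hy hxy.symm⟩

theorem bipHoleNum_eq_of_forall_hasBipHole {m : ℕ} (hm : 0 < m)
    (hole : ∀ s t, 0 < s → 0 < t → s + t ≤ m → G.HasBipHole s t)
    (noHole : ∃ s t, 0 < s ∧ 0 < t ∧ s + t = m + 1 ∧ ¬ G.HasBipHole s t) :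
    G.bipHoleNum = m := by
  refine le_antisymm (Nat.sInf_le ⟨hm, noHole⟩) (le_csInf ⟨m, hm, noHole⟩ ?_)
  rintro k ⟨-, s, t, hs, ht, hst, hnot⟩
  by_contra! hk
  exact hnot (hole s t hs ht (by omega))

end SimpleGraph

theorem Fin.card_le_card_of_forall_val_mem {n : ℕ} {S : Finset (Fin n)} {I : Finset ℕ}
    (h : ∀ x ∈ S, x.val ∈ I) : S.card ≤ I.card :=
  Finset.card_le_card_of_injOn Fin.val h Fin.val_injective.injOn

namespace oneSumGraph

variable {a b : ℕ}

theorem not_adj_iff {x y : Fin (a + b - 1)} (hxy : x ≠ y) :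
    ¬ (oneSumGraph a b).Adj x y ↔
      (a ≤ x.val ∧ y.val + 2 ≤ a) ∨ (x.val + 2 ≤ a ∧ a ≤ y.val) := by
  simp only [oneSumGraph, hxy, ne_eq, not_false_eq_true, true_and]
  omega

theorem hasBipHole {s t : ℕ} (hs : s ≤ b - 1) (ht : t ≤ a - 1) :
    (oneSumGraph a b).HasBipHole s t := by
  have hS : ∀ m ∈ Finset.Ico a (a + s), m < a + b - 1 := by
    intro m hm
    rw [Finset.mem_Ico] at hm
    omega
  have hT : ∀ m ∈ Finset.range t, m < a + b - 1 := by
    intro m hm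
    rw [Finset.mem_range] at hm
    omega
  refine ⟨(Finset.Ico a (a + s)).attachFin hS, (Finset.range t).attachFin hT, ?_, ?_,
    (Finset.card_attachFin _ hT).trans (Finset.card_range t), ?_⟩
  · refine Finset.disjoint_left.mpr fun x hx hx' => ?_
    rw [Finset.mem_attachFin, Finset.mem_Ico] at hx
    rw [Finset.mem_attachFin, Finset.mem_range] at hx'
    omega
  · rw [Finset.card_attachFin, Nat.card_Ico]
    omega
  · intro x hx y hy
    rw [Finset.mem_attachFin, Finset.mem_Ico] at hx
    rw [Finset.mem_attachFin, Finset.mem_range] at hy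
    rw [not_adj_iff (Fin.ne_of_val_ne (by omega))]
    omega

section Hole

variable {S T : Finset (Fin (a + b - 1))} (hST : Disjoint S T)
  (hadj : ∀ x ∈ S, ∀ y ∈ T, ¬ (oneSumGraph a b).Adj x y)
include hST hadj

theorem val_cases_of_forall_not_adj {x y : Fin (a + b - 1)} (hx : x ∈ S) (hy : y ∈ T) :
    (a ≤ x.val ∧ y.val + 2 ≤ a) ∨ (x.val + 2 ≤ a ∧ a ≤ y.val) :=
  (not_adj_iff (Finset.disjoint_iff_ne.mp hST x hx y hy)).mp (hadj x hx y hy)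

theorem card_le_of_forall_not_adj {x₀ y₀ : Fin (a + b - 1)} (hx₀ : x₀ ∈ S) (hy₀ : y₀ ∈ T)
    (hx₀a : a ≤ x₀.val) : S.card ≤ b - 1 ∧ T.card ≤ a - 1 := by
  have hT : ∀ y ∈ T, y.val + 2 ≤ a := by
    intro y hy
    have := val_cases_of_forall_not_adj hST hadj hx₀ hy
    omega
  have hS : ∀ x ∈ S, a ≤ x.val := by
    intro x hx
    have := val_cases_of_forall_not_adj hST hadj hx hy₀
    have := hT y₀ hy₀
    omega
  constructor
  · have := Fin.card_le_card_of_forall_val_mem (I := Finset.Ico a (a + b - 1))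
      fun x hx => Finset.mem_Ico.mpr ⟨hS x hx, x.isLt⟩
    rw [Nat.card_Ico] at this
    omega
  · have := Fin.card_le_card_of_forall_val_mem (I := Finset.range (a - 1))
      fun y hy => Finset.mem_range.mpr (by have := hT y hy; omega)
    rwa [Finset.card_range] at this

end Hole

theorem hasBipHole_iff {s t : ℕ} (hs : 0 < s) (ht : 0 < t) :
    (oneSumGraph a b).HasBipHole s t ↔ (s ≤ b - 1 ∧ t ≤ a - 1) ∨ (s ≤ a - 1 ∧ t ≤ b - 1) := by
  refine ⟨fun ⟨S, T, hST, hS, hT, hadj⟩ => ?_, ?_⟩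
  · obtain ⟨x₀, hx₀⟩ := Finset.card_pos.mp (hS ▸ hs)
    obtain ⟨y₀, hy₀⟩ := Finset.card_pos.mp (hT ▸ ht)
    have hadj' : ∀ y ∈ T, ∀ x ∈ S, ¬ (oneSumGraph a b).Adj y x :=
      fun y hy x hx hyx => hadj x hx y hy hyx.symm
    rcases val_cases_of_forall_not_adj hST hadj hx₀ hy₀ with ⟨hx₀a, -⟩ | ⟨-, hy₀a⟩
    · exact .inl (hS ▸ hT ▸ card_le_of_forall_not_adj hST hadj hx₀ hy₀ hx₀a)
    · exact .inr (hS ▸ hT ▸ (card_le_of_forall_not_adj hST.symm hadj' hy₀ hx₀ hy₀a).symm)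
  · rintro (⟨hs, ht⟩ | ⟨hs, ht⟩)
    · exact hasBipHole hs ht
    · exact (hasBipHole ht hs).symm

end oneSumGraph

/-- For `2 ≤ a ≤ b`, `ᾱ(K_a ⊕₁ K_b) = min (2a - 1) b`. -/
theorem stmt16 (a b : ℕ) (ha : 2 ≤ a) (hab : a ≤ b) :
    (oneSumGraph a b).bipHoleNum = min (2 * a - 1) b := by
  refine SimpleGraph.bipHoleNum_eq_of_forall_hasBipHole (by omega) ?_ ?_
  · intro s t hs ht hst
    rw [oneSumGraph.hasBipHole_iff hs ht]
    omega
  · by_cases h : 2 * a - 1 ≤ b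
    · refine ⟨a, a, by omega, by omega, by omega, ?_⟩
      rw [oneSumGraph.hasBipHole_iff (by omega) (by omega)]
      omega
    · refine ⟨b, 1, by omega, by omega, by omega, ?_⟩
      rw [oneSumGraph.hasBipHole_iff (by omega) (by omega)]
      omega
end
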